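/- arXiv:1503.05314 — 2 statements merged into one kernel-verified Lean document; each statement's English description precedes it below -/
import Mathlib

section
/- The TSR state-evolution sequences converge: there exist real numbers v^∞ ∈ [0, 1] and η^∞ ∈ (0, M/(N·σ²)] such that v^t → v^∞ and η^{t+1} → η^∞ as t → ∞. -/
/-!
Write `φ v = (a v + b)⁻¹` with `a = (N - M)/M ≥ 0`, `b = Nσ²/M > 0`, and `ψ η = (1/m η - η)⁻¹`.
By (ii), `1/m η - η ≥ 1`, so `ψ` maps `(0, ∞)` into `(0, 1]`, and by (iii) it is non-increasing
there. Since `φ` is non-increasing from `[0, ∞)` into `(0, ∞)`, the map `ψ ∘ φ` is non-decreasing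
on `[0, ∞)` and maps it into `(0, 1]`. Hence its orbit `v` starting at `v⁰ = 1 ≥ v¹` is
non-increasing and bounded below by `0`, so it converges, and `η^{t+1} = φ(v^t)` converges
by continuity of `φ`.
-/

open Filter Set

theorem antitone_of_succ_eq_of_monotoneOn {α : Type*} [Preorder α] {f : α → α} {s : Set α}
    {u : ℕ → α} (hf : MonotoneOn f s) (hs : MapsTo f s s) (hu : ∀ n, u (n + 1) = f (u n))
    (h0 : u 0 ∈ s) (h10 : u 1 ≤ u 0) : Antitone u := by
  have mem : ∀ n, u n ∈ s := fun n => Nat.rec h0 (fun n h => hu n ▸ hs h) n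
  refine antitone_nat_of_succ_le fun n => ?_
  induction n with
  | zero => exact h10
  | succ n ih => exact (hu _).trans_le ((hf (mem _) (mem _) ih).trans_eq (hu n).symm)

theorem one_le_one_div_sub {x y : ℝ} (hx : 0 ≤ x) (hy : 0 < y) (hyx : y ≤ 1 / (1 + x)) :
    1 ≤ 1 / y - x := by
  have : 1 + x ≤ 1 / y := by
    rwa [le_one_div (by positivity) hy]
  linarith

theorem antitoneOn_inv_affine {a b : ℝ} (ha : 0 ≤ a) (hb : 0 < b) :
    AntitoneOn (fun v => (a * v + b)⁻¹) (Ici 0) := fun _ hx _ _ hxy =>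
  inv_anti₀ (by have : (0 : ℝ) ≤ _ := hx; positivity) (by gcongr)

theorem inv_affine_mem_Ioc {a b v : ℝ} (ha : 0 ≤ a) (hb : 0 < b) (hv : 0 ≤ v) :
    (a * v + b)⁻¹ ∈ Ioc 0 b⁻¹ :=
  ⟨by positivity, inv_anti₀ hb (by nlinarith)⟩

/-- One round `v ↦ ψ (φ v)` of the state evolution, with `φ v = (a v + b)⁻¹`. -/
noncomputable def seStep (m : ℝ → ℝ) (a b x : ℝ) : ℝ :=
  (1 / m (a * x + b)⁻¹ - (a * x + b)⁻¹)⁻¹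

section MMSE

variable {m : ℝ → ℝ} (hm : ∀ η > (0 : ℝ), 0 < m η ∧ m η ≤ 1 / (1 + η))
include hm

theorem one_le_one_div_mmse_sub {η : ℝ} (hη : 0 < η) : 1 ≤ 1 / m η - η :=
  one_le_one_div_sub hη.le (hm η hη).1 (hm η hη).2

theorem inv_one_div_mmse_sub_mem_Ioc {η : ℝ} (hη : 0 < η) : (1 / m η - η)⁻¹ ∈ Ioc 0 1 :=
  have h := one_le_one_div_mmse_sub hm hη
  ⟨inv_pos.mpr (by linarith), inv_le_one_of_one_le₀ h⟩

theorem antitoneOn_inv_one_div_mmse_sub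
    (hf : ∀ η₁ η₂ : ℝ, 0 < η₁ → η₁ ≤ η₂ → 1 / m η₁ - η₁ ≤ 1 / m η₂ - η₂) :
    AntitoneOn (fun η => (1 / m η - η)⁻¹) (Ioi 0) := fun _ hx _ _ hxy =>
  inv_anti₀ (by linarith [one_le_one_div_mmse_sub hm hx]) (hf _ _ hx hxy)

variable {a b : ℝ} (ha : 0 ≤ a) (hb : 0 < b)
include ha hb

theorem seStep_mem_Ioc {x : ℝ} (hx : 0 ≤ x) : seStep m a b x ∈ Ioc 0 1 :=
  inv_one_div_mmse_sub_mem_Ioc hm (inv_affine_mem_Ioc ha hb hx).1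

theorem monotoneOn_seStep
    (hf : ∀ η₁ η₂ : ℝ, 0 < η₁ → η₁ ≤ η₂ → 1 / m η₁ - η₁ ≤ 1 / m η₂ - η₂) :
    MonotoneOn (seStep m a b) (Ici 0) :=
  (antitoneOn_inv_one_div_mmse_sub hm hf).comp (antitoneOn_inv_affine ha hb)
    fun _ hx => (inv_affine_mem_Ioc ha hb hx).1

theorem exists_tendsto_of_succ_eq_seStep
    (hf : ∀ η₁ η₂ : ℝ, 0 < η₁ → η₁ ≤ η₂ → 1 / m η₁ - η₁ ≤ 1 / m η₂ - η₂)
    {v : ℕ → ℝ} (hv0 : v 0 = 1) (hv : ∀ t, v (t + 1) = seStep m a b (v t)) :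
    ∃ vinf ∈ Icc (0 : ℝ) 1, Tendsto v atTop (nhds vinf) := by
  have hv_mem (t : ℕ) : v t ∈ Icc 0 1 := by
    induction t with
    | zero => simp [hv0]
    | succ t ih => rw [hv]; exact Ioc_subset_Icc_self (seStep_mem_Ioc hm ha hb ih.1)
  have hv_anti : Antitone v :=
    antitone_of_succ_eq_of_monotoneOn (monotoneOn_seStep hm ha hb hf)
      (fun _ hx => (seStep_mem_Ioc hm ha hb hx).1.le) hv (hv_mem 0).1 (hv0 ▸ (hv_mem 1).2)
  have hv_lim := tendsto_atTop_ciInf hv_anti ⟨0, by rintro _ ⟨t, rfl⟩; exact (hv_mem t).1⟩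
  exact ⟨_, isClosed_Icc.mem_of_tendsto hv_lim (.of_forall hv_mem), hv_lim⟩

end MMSE

/-- The TSR state-evolution sequences converge: there exist `v^∞ ∈ [0, 1]` and
`η^∞ ∈ (0, M/(N·σ²)]` such that `v^t → v^∞` and `η^{t+1} → η^∞` as `t → ∞`. -/
theorem tsr_se_converges (M N σ2 : ℝ) (hM : 0 < M) (hMN : M < N) (hσ2 : 0 < σ2)
    (m : ℝ → ℝ)
    (hm : ∀ η > (0 : ℝ), 0 < m η ∧ m η ≤ 1 / (1 + η))
    (hf : ∀ η₁ η₂ : ℝ, 0 < η₁ → η₁ ≤ η₂ → 1 / m η₁ - η₁ ≤ 1 / m η₂ - η₂)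
    (v η : ℕ → ℝ) (hv0 : v 0 = 1)
    (hη : ∀ t : ℕ, η (t + 1) = (((N - M) / M) * v t + (N / M) * σ2)⁻¹)
    (hv : ∀ t : ℕ, v (t + 1) = (1 / m (η (t + 1)) - η (t + 1))⁻¹) :
    ∃ vinf ηinf : ℝ, vinf ∈ Set.Icc (0 : ℝ) 1 ∧ ηinf ∈ Set.Ioc (0 : ℝ) (M / (N * σ2)) ∧
      Tendsto v atTop (nhds vinf) ∧
      Tendsto (fun t : ℕ => η (t + 1)) atTop (nhds ηinf) := by
  set a := (N - M) / M
  set b := (N / M) * σ2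
  have ha : 0 ≤ a := div_nonneg (by linarith) hM.le
  have hb : 0 < b := mul_pos (div_pos (by linarith) hM) hσ2
  have hb_inv : b⁻¹ = M / (N * σ2) := by simp only [b]; field_simp
  obtain ⟨vinf, hvinf_mem, hv_lim⟩ :=
    exists_tendsto_of_succ_eq_seStep hm ha hb hf hv0
      fun t => by rw [hv t, hη t, seStep]
  refine ⟨vinf, (a * vinf + b)⁻¹, hvinf_mem, hb_inv ▸ inv_affine_mem_Ioc ha hb hvinf_mem.1,
    hv_lim, ?_⟩
  have hden : a * vinf + b ≠ 0 := by have := hvinf_mem.1; positivity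
  exact (((tendsto_const_nhds.mul hv_lim).add tendsto_const_nhds).inv₀ hden).congr
    fun t => (hη t).symm
end

section
/- Corollary 1: for every t ≥ 0, the per-iteration estimation MSE of TSR-DFT is no larger than that of AMP-IID, i.e., m(η_T^{t+1}) ≤ m(η_A^{t+1}). -/
/-!
Since `v_T⁰ ≤ v_A⁰`, it suffices to show that the variance ordering `v_T^t ≤ v_A^t` propagates,
because a smaller variance yields a larger SNR and `m` is non-increasing. Given `η_A ≤ η_T`,
monotonicity of `η ↦ 1/m(η) − η` gives `v_T^{t+1} ≤ c / (1/m(η_A) − η_A)` with `c = 1 − M/N`,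
and this is at most `m(η_A) = v_A^{t+1}` exactly when `η_A m(η_A) ≤ M/N`. That last bound
follows from `m(η_A^{t+1}) ≤ v_A^t`, i.e. from the AMP variances being non-increasing.
-/

open Set

structure IsMMSEProfile (m : ℝ → ℝ) : Prop where
  antitoneOn : AntitoneOn m (Ioi 0)
  pos : ∀ η, 0 < η → 0 < m η
  le_one_div_one_add : ∀ η, 0 < η → m η ≤ 1 / (1 + η)
  monotoneOn_one_div_sub : MonotoneOn (fun η => 1 / m η - η) (Ioi 0)

namespace IsMMSEProfile

variable {m : ℝ → ℝ} {η : ℝ}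

theorem le_one (hm : IsMMSEProfile m) (hη : 0 < η) : m η ≤ 1 :=
  (hm.le_one_div_one_add η hη).trans <| (div_le_one (by linarith)).2 (by linarith)

theorem one_le_one_div_sub (hm : IsMMSEProfile m) (hη : 0 < η) : 1 ≤ 1 / m η - η := by
  have : 1 + η ≤ 1 / m η :=
    (le_one_div (hm.pos η hη) (by linarith)).1 (hm.le_one_div_one_add η hη)
  linarith

theorem mul_inv_one_div_sub_le (hm : IsMMSEProfile m) {c : ℝ} (hη : 0 < η)
    (hc : c ≤ 1 - η * m η) : c * (1 / m η - η)⁻¹ ≤ m η := by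
  rw [mul_inv_le_iff₀' (by linarith [hm.one_le_one_div_sub hη]), sub_mul, one_div,
    inv_mul_cancel₀ (hm.pos η hη).ne']
  nlinarith

end IsMMSEProfile

/-- The paper's `η^{t+1}` is `snr (N/M) σ² v^t`. -/
noncomputable def snr (α σ2 v : ℝ) : ℝ := (α * v + α * σ2)⁻¹

section snr

variable {α σ2 v w : ℝ}

theorem snr_pos (hα : 0 < α) (hσ2 : 0 < σ2) (hv : 0 ≤ v) : 0 < snr α σ2 v := by
  unfold snr; positivity

theorem snr_anti (hα : 0 < α) (hσ2 : 0 < σ2) (hv : 0 ≤ v) (hvw : v ≤ w) :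
    snr α σ2 w ≤ snr α σ2 v :=
  inv_anti₀ (by positivity) (by nlinarith)

theorem snr_mul_le (hα : 0 < α) (hσ2 : 0 < σ2) (hv : 0 ≤ v) {x : ℝ} (hx : x ≤ v + σ2) :
    snr α σ2 v * x ≤ α⁻¹ := by
  have hden : 0 < α * v + α * σ2 := by positivity
  rw [snr, inv_mul_le_iff₀ hden, ← mul_add, mul_comm α, mul_inv_cancel_right₀ hα.ne']
  exact hx

end snr

section stateEvolution

variable {m : ℝ → ℝ} {α σ2 c : ℝ} {u v : ℕ → ℝ}

theorem amp_pos (hm : IsMMSEProfile m) (hα : 0 < α) (hσ2 : 0 < σ2) (hv0 : 0 < v 0)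
    (hv : ∀ t, v (t + 1) = m (snr α σ2 (v t))) : ∀ t, 0 < v t
  | 0 => hv0
  | t + 1 => hv t ▸ hm.pos _ (snr_pos hα hσ2 (amp_pos hm hα hσ2 hv0 hv t).le)

theorem amp_succ_le (hm : IsMMSEProfile m) (hα : 0 < α) (hσ2 : 0 < σ2) (hv0 : 1 ≤ v 0)
    (hv : ∀ t, v (t + 1) = m (snr α σ2 (v t))) : ∀ t, v (t + 1) ≤ v t := by
  have hpos := amp_pos hm hα hσ2 (by linarith) hv
  intro t
  induction t with
  | zero => rw [hv 0]; linarith [hm.le_one (snr_pos hα hσ2 (hpos 0).le)]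
  | succ t ih =>
    rw [hv t, hv (t + 1)]
    have hη := snr_pos hα hσ2 (hpos t).le
    have hηle := snr_anti hα hσ2 (hpos (t + 1)).le ih
    exact hm.antitoneOn hη (hη.trans_le hηle) hηle

theorem tsr_le_amp (hm : IsMMSEProfile m) (hα : 0 < α) (hσ2 : 0 < σ2) (hc0 : 0 ≤ c)
    (hc : c ≤ 1 - α⁻¹) (hu0 : 0 ≤ u 0) (huv0 : u 0 ≤ v 0) (hv0 : 1 ≤ v 0)
    (hu : ∀ t, u (t + 1) = c * (1 / m (snr α σ2 (u t)) - snr α σ2 (u t))⁻¹)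
    (hv : ∀ t, v (t + 1) = m (snr α σ2 (v t))) : ∀ t, 0 ≤ u t ∧ u t ≤ v t := by
  intro t
  induction t with
  | zero => exact ⟨hu0, huv0⟩
  | succ t ih =>
    obtain ⟨hut, huvt⟩ := ih
    set ηT := snr α σ2 (u t)
    set ηA := snr α σ2 (v t)
    have hηT : 0 < ηT := snr_pos hα hσ2 hut
    have hηA : 0 < ηA := snr_pos hα hσ2 (hut.trans huvt)
    have hηAT : ηA ≤ ηT := snr_anti hα hσ2 hut huvt
    have hprecT := hm.one_le_one_div_sub hηT
    have hprecA := hm.one_le_one_div_sub hηA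
    have hηA_mul : ηA * m ηA ≤ α⁻¹ := snr_mul_le hα hσ2 (hut.trans huvt) <| by
      linarith [hv t, amp_succ_le hm hα hσ2 hv0 hv t]
    refine ⟨hu t ▸ mul_nonneg hc0 (inv_nonneg.2 (by linarith)), ?_⟩
    calc u (t + 1) = c * (1 / m ηT - ηT)⁻¹ := hu t
      _ ≤ c * (1 / m ηA - ηA)⁻¹ := mul_le_mul_of_nonneg_left
          (inv_anti₀ (by linarith) (hm.monotoneOn_one_div_sub hηA hηT hηAT)) hc0
      _ ≤ m ηA := hm.mul_inv_one_div_sub_le hηA (by linarith)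
      _ = v (t + 1) := (hv t).symm

end stateEvolution

/-- Corollary 1: for every `t ≥ 0`, the per-iteration estimation MSE of TSR-DFT is no
larger than that of AMP-IID: `m(η_T^{t+1}) ≤ m(η_A^{t+1})`. -/
theorem tsr_mse_dominates (M N σ2 : ℝ) (hM : 0 < M) (hMN : M < N) (hσ2 : 0 < σ2)
    (m : ℝ → ℝ)
    (hmono : ∀ η₁ η₂ : ℝ, 0 < η₁ → η₁ ≤ η₂ → m η₂ ≤ m η₁)
    (hm : ∀ η > (0 : ℝ), 0 < m η ∧ m η ≤ 1 / (1 + η))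
    (hf : ∀ η₁ η₂ : ℝ, 0 < η₁ → η₁ ≤ η₂ → 1 / m η₁ - η₁ ≤ 1 / m η₂ - η₂)
    (vT ηT vA ηA : ℕ → ℝ)
    (hvT0 : vT 0 = (N - M) / N)
    (hηT : ∀ t : ℕ, ηT (t + 1) = ((N / M) * vT t + (N / M) * σ2)⁻¹)
    (hvT : ∀ t : ℕ, vT (t + 1) = ((N - M) / N) * (1 / m (ηT (t + 1)) - ηT (t + 1))⁻¹)
    (hvA0 : vA 0 = 1)
    (hηA : ∀ t : ℕ, ηA (t + 1) = ((N / M) * vA t + (N / M) * σ2)⁻¹)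
    (hvA : ∀ t : ℕ, vA (t + 1) = m (ηA (t + 1))) :
    ∀ t : ℕ, m (ηT (t + 1)) ≤ m (ηA (t + 1)) := by
  have hprofile : IsMMSEProfile m :=
    ⟨fun _ h₁ _ _ h => hmono _ _ h₁ h, fun η hη => (hm η hη).1, fun η hη => (hm η hη).2,
      fun _ h₁ _ _ h => hf _ _ h₁ h⟩
  have hN : 0 < N := hM.trans hMN
  have hα : 0 < N / M := div_pos hN hM
  have hc : (N - M) / N = 1 - (N / M)⁻¹ := by field_simp
  have hc0 : 0 ≤ (N - M) / N := div_nonneg (by linarith) hN.le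
  have hT : ∀ t, vT (t + 1) =
      (N - M) / N * (1 / m (snr (N / M) σ2 (vT t)) - snr (N / M) σ2 (vT t))⁻¹ := fun t => by
    rw [hvT, hηT, snr]
  have hA : ∀ t, vA (t + 1) = m (snr (N / M) σ2 (vA t)) := fun t => by rw [hvA, hηA, snr]
  intro t
  obtain ⟨hvT_nonneg, hvT_le⟩ := tsr_le_amp hprofile hα hσ2 hc0 hc.le (hvT0 ▸ hc0)
    (by rw [hvT0, hvA0, div_le_one hN]; linarith) hvA0.ge hT hA t
  rw [hηT, hηA]
  exact hprofile.antitoneOn (snr_pos hα hσ2 (hvT_nonneg.trans hvT_le))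
    (snr_pos hα hσ2 hvT_nonneg) (snr_anti hα hσ2 hvT_nonneg hvT_le)
end
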